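/- arXiv:1812.07550 — 2 statements merged into one kernel-verified Lean document; each statement's English description precedes it below -/
import Mathlib

section
/- For all positive integers n and j, the sets G_{n,j} and S_{n,j} have the same cardinality. -/
/-- The parity function: `P k = 0` if `k` is even and `P k = 1` if `k` is odd. -/
def P (m : ℤ) : ℤ := if Even m then 0 else 1

/-- The map `g` of the bijection: `γ = (γ₁, …, γ_j) ↦ (π, ν)` where
`π_k = γ_k + 4k - 2j - 2 + P(γ_k) + 2 ∑_{i=k+1}^j P(γ_i)` and `ν` contains the part
`2k - 1` exactly for those `k` with `γ_k` odd.  (Indices here are 0-based, so the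
`k`-th entry of the tuple, `k : Fin j`, is the `(k+1)`-st part.) -/
def gMap (j : ℕ) (γ : Fin j → ℤ) : (Fin j → ℤ) × Finset ℤ :=
  (fun k => γ k + 4 * ((k : ℤ) + 1) - 2 * j - 2 + P (γ k)
      + 2 * ∑ i ∈ Finset.Ioi k, P (γ i),
   Finset.image (fun k : Fin j => 2 * (k : ℤ) + 1)
     (Finset.univ.filter fun k => Odd (γ k)))

/-- The inverse map `h`: `(π, ν) ↦ γ` where
`γ_k = π_k - 4k + 2j + 2 - f_{2k-1} - 2 ∑_{i=k+1}^j f_{2i-1}`, `f_{2k-1}` being the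
multiplicity (0 or 1) of the part `2k - 1` in `ν`. -/
def hMap (j : ℕ) (σ : (Fin j → ℤ) × Finset ℤ) : Fin j → ℤ :=
  fun k => σ.1 k - 4 * ((k : ℤ) + 1) + 2 * (j : ℤ) + 2
    - (if 2 * (k : ℤ) + 1 ∈ σ.2 then 1 else 0)
    - 2 * ∑ i ∈ Finset.Ioi k, (if 2 * (i : ℤ) + 1 ∈ σ.2 then 1 else 0)

/-- `Gset n j` : Göllnitz–Gordon partitions of `n` with exactly `j` parts, as
weakly decreasing `j`-tuples `γ` of positive integers with `γ_i - γ_{i+1} ≥ 2`,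
and `γ_i - γ_{i+1} ≥ 3` whenever `γ_i` is even. -/
def Gset (n j : ℕ) : Set (Fin j → ℤ) :=
  {γ | (∀ k, 1 ≤ γ k) ∧
    (∀ i : ℕ, ∀ h : i + 1 < j,
      2 ≤ γ ⟨i, Nat.lt_of_succ_lt h⟩ - γ ⟨i + 1, h⟩ ∧
      (Even (γ ⟨i, Nat.lt_of_succ_lt h⟩) → 3 ≤ γ ⟨i, Nat.lt_of_succ_lt h⟩ - γ ⟨i + 1, h⟩)) ∧
    ∑ k, γ k = (n : ℤ)}

/-- `Sset n j` : signed Göllnitz–Gordon partitions of `n` whose positive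
subpartition `π` has exactly `j` parts: `π` is a weakly decreasing `j`-tuple of even
parts, each at least `2j`, and the negative subpartition `ν` is a set of distinct odd
positive parts, each at most `2j - 1` (hence there are at most `j` of them), with
`|π| - |ν| = n`. -/
def Sset (n j : ℕ) : Set ((Fin j → ℤ) × Finset ℤ) :=
  {σ | Antitone σ.1 ∧ (∀ k, 1 ≤ σ.1 k) ∧
    (∀ k, Even (σ.1 k) ∧ 2 * (j : ℤ) ≤ σ.1 k) ∧
    σ.2.card ≤ j ∧
    (∀ m ∈ σ.2, Odd m ∧ 1 ≤ m ∧ m ≤ 2 * (j : ℤ) - 1) ∧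
    (∑ k, σ.1 k) - (∑ m ∈ σ.2, m) = (n : ℤ)}

/-!
The bijection is `γ ↦ (π, ν)` with `ν = {2k + 1 | γ_k odd}` and `π_k = γ_k + P γ_k + c_k`,
where the correction `c_k = 4(k + 1) - 2j - 2 + 2 ∑_{i > k} P γ_i` is even. Adding `P γ_k`
makes every part even, and the Göllnitz–Gordon gap conditions translate into
`π_i ≥ π_{i+1}` and `π_{j-1} ≥ 2j`. The constant parts of `c` cancel in `|π|`, while each odd
`γ_i` contributes `1 + 2i` to `|π| - |γ|`, which is the part `2i + 1` of `ν`; hence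
`|π| - |ν| = |γ|`. The inverse subtracts the same correction, read off from `ν`, and the parity
of `γ_k` is recovered from whether `2k + 1 ∈ ν`.
-/

open Finset

section Parity

lemma P_of_even {m : ℤ} (h : Even m) : P m = 0 := if_pos h

lemma P_of_odd {m : ℤ} (h : Odd m) : P m = 1 := if_neg (Int.not_even_iff_odd.mpr h)

lemma P_eq_one_iff {m : ℤ} : P m = 1 ↔ Odd m := by
  rcases Int.even_or_odd m with h | h
  · simp [P_of_even h, Int.not_odd_iff_even.mpr h]
  · simp [P_of_odd h, h]

lemma P_eq_of_even_add {m e : ℤ} (he : e = 0 ∨ e = 1) (h : Even (m + e)) : P m = e := by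
  simp only [P, Int.even_iff] at h ⊢
  split_ifs <;> omega

lemma even_add_P (m : ℤ) : Even (m + P m) := by
  simp only [P, Int.even_iff]
  split_ifs <;> omega

lemma two_le_add_P {m : ℤ} (h : 1 ≤ m) : 2 ≤ m + P m := by
  simp only [P, Int.even_iff]
  split_ifs <;> omega

/-- Since `π_i - π_{i+1} = γ_i - γ_{i+1} + P γ_i + P γ_{i+1} - 4`, this is what makes `π`
weakly decreasing. -/
lemma four_le_sub_add_P_add_P {a b : ℤ} (h2 : 2 ≤ a - b) (h3 : Even a → 3 ≤ a - b) :
    4 ≤ a - b + P a + P b := by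
  simp only [P, Int.even_iff] at h3 ⊢
  split_ifs at h3 ⊢ <;> omega

end Parity

lemma antitone_fin_of_succ_le {α : Type*} [Preorder α] {j : ℕ} {f : Fin j → α}
    (h : ∀ i : ℕ, ∀ hi : i + 1 < j, f ⟨i + 1, hi⟩ ≤ f ⟨i, Nat.lt_of_succ_lt hi⟩) :
    Antitone f := by
  rintro ⟨a, ha⟩ ⟨b, hb⟩ (hab : a ≤ b)
  induction b, hab using Nat.le_induction with
  | base => rfl
  | succ b hab ih => exact (h b hb).trans (ih _)

section Offset

variable {j : ℕ}

/-- The common shape of `gMap` and `hMap`: `gMap` adds `offset j (P ∘ γ)` to `γ` and `hMap`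
subtracts `offset j (oddMult ν)` from `π`. -/
def offset (j : ℕ) (e : Fin j → ℤ) (k : Fin j) : ℤ :=
  4 * ((k : ℤ) + 1) - 2 * j - 2 + e k + 2 * ∑ i ∈ Ioi k, e i

lemma Ioi_eq_insert_Ioi_succ (i : ℕ) (hi : i + 1 < j) :
    Ioi (⟨i, Nat.lt_of_succ_lt hi⟩ : Fin j) = insert ⟨i + 1, hi⟩ (Ioi ⟨i + 1, hi⟩) := by
  ext x
  simp only [mem_Ioi, mem_insert, Fin.lt_def, Fin.ext_iff]
  omega

lemma offset_sub_offset_succ (e : Fin j → ℤ) (i : ℕ) (hi : i + 1 < j) :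
    offset j e ⟨i, Nat.lt_of_succ_lt hi⟩ - offset j e ⟨i + 1, hi⟩
      = e ⟨i, Nat.lt_of_succ_lt hi⟩ + e ⟨i + 1, hi⟩ - 4 := by
  simp only [offset]
  rw [Ioi_eq_insert_Ioi_succ i hi, sum_insert (by simp)]
  push_cast
  ring

lemma offset_last (e : Fin j → ℤ) (h : j - 1 < j) :
    offset j e ⟨j - 1, h⟩ = 2 * j - 2 + e ⟨j - 1, h⟩ := by
  have hempty : Ioi (⟨j - 1, h⟩ : Fin j) = ∅ := by
    ext x
    simp only [mem_Ioi, Fin.lt_def, notMem_empty, iff_false]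
    omega
  simp only [offset, hempty, sum_empty]
  push_cast [Nat.cast_sub (Nat.one_le_of_lt h)]
  ring

lemma offset_le {e : Fin j → ℤ} (he : ∀ i, e i ≤ 1) (k : Fin j) :
    offset j e k ≤ 2 * k + 1 := by
  have hsum : ∑ i ∈ Ioi k, e i ≤ ((j - 1 - k : ℕ) : ℤ) := by
    simpa [Fin.card_Ioi] using sum_le_card_nsmul (Ioi k) e 1 fun i _ => he i
  have hk := k.isLt
  simp only [offset]
  push_cast [Nat.sub_sub, Nat.cast_sub (show (1 + k : ℕ) ≤ j by omega)] at hsum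
  linarith [he k]

lemma even_offset_sub (e : Fin j → ℤ) (k : Fin j) : Even (offset j e k - e k) :=
  ⟨2 * (k : ℤ) + 1 - j + ∑ i ∈ Ioi k, e i, by simp only [offset]; ring⟩

/-- Pairing `k` with `j - 1 - k`, the summands cancel. -/
lemma sum_four_mul_succ_sub_eq_zero (j : ℕ) : ∑ k : Fin j, (4 * ((k : ℤ) + 1) - 2 * j - 2) = 0 := by
  have hrev := Equiv.sum_comp Fin.revPerm fun k : Fin j => 4 * ((k : ℤ) + 1) - 2 * j - 2
  simp only [Fin.revPerm_apply] at hrev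
  have hpair : ∀ k : Fin j, (4 * ((Fin.rev k : ℤ) + 1) - 2 * j - 2)
      = -(4 * ((k : ℤ) + 1) - 2 * j - 2) := fun k => by
    rw [Fin.val_rev, Nat.cast_sub k.isLt]
    push_cast
    ring
  rw [sum_congr rfl fun k _ => hpair k, sum_neg_distrib] at hrev
  linarith

lemma sum_sum_Ioi (e : Fin j → ℤ) :
    ∑ k : Fin j, ∑ i ∈ Ioi k, e i = ∑ i : Fin j, (i : ℤ) * e i := by
  rw [sum_comm' (t' := univ) (s' := Iio) (by simp)]
  refine sum_congr rfl fun i _ => ?_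
  simp [Fin.card_Iio]

lemma sum_offset (e : Fin j → ℤ) :
    ∑ k, offset j e k = ∑ k : Fin j, (2 * (k : ℤ) + 1) * e k := by
  simp only [offset, sum_add_distrib, sum_four_mul_succ_sub_eq_zero, sum_sum_Ioi, mul_sum]
  rw [zero_add, ← sum_add_distrib]
  exact sum_congr rfl fun k _ => by ring

end Offset

section OddParts

variable {j : ℕ}

/-- The multiplicity `f_{2k+1} ∈ {0, 1}` of the odd part `2k + 1` in `ν`. -/
def oddMult (ν : Finset ℤ) (k : Fin j) : ℤ := if 2 * (k : ℤ) + 1 ∈ ν then 1 else 0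

lemma oddMult_eq_zero_or_one (ν : Finset ℤ) (k : Fin j) : oddMult ν k = 0 ∨ oddMult ν k = 1 := by
  unfold oddMult
  split_ifs <;> simp

lemma oddMult_eq_one_iff {ν : Finset ℤ} {k : Fin j} : oddMult ν k = 1 ↔ 2 * (k : ℤ) + 1 ∈ ν := by
  unfold oddMult
  split_ifs with h <;> simp [h]

lemma image_filter_oddMult {ν : Finset ℤ}
    (hν : ∀ m ∈ ν, Odd m ∧ 1 ≤ m ∧ m ≤ 2 * (j : ℤ) - 1) :
    (univ.filter fun k : Fin j => 2 * (k : ℤ) + 1 ∈ ν).image (fun k : Fin j => 2 * (k : ℤ) + 1)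
      = ν := by
  ext m
  simp only [mem_image, mem_filter, mem_univ, true_and]
  refine ⟨fun ⟨k, hk, hkm⟩ => hkm ▸ hk, fun hm => ?_⟩
  obtain ⟨⟨c, rfl⟩, h1, h2⟩ := hν m hm
  exact ⟨⟨c.toNat, by omega⟩, by simpa [show (c.toNat : ℤ) = c by omega] using hm,
    by simp only; omega⟩

lemma sum_eq_sum_oddMult {ν : Finset ℤ}
    (hν : ∀ m ∈ ν, Odd m ∧ 1 ≤ m ∧ m ≤ 2 * (j : ℤ) - 1) :
    ∑ m ∈ ν, m = ∑ k : Fin j, (2 * (k : ℤ) + 1) * oddMult ν k := by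
  conv_lhs => rw [← image_filter_oddMult hν]
  rw [sum_image fun a _ b _ hab => Fin.ext (by omega), sum_filter]
  exact sum_congr rfl fun k _ => by unfold oddMult; split_ifs <;> simp

end OddParts

section Bijection

variable {n j : ℕ}

lemma gMap_fst_apply (γ : Fin j → ℤ) (k : Fin j) :
    (gMap j γ).1 k = γ k + offset j (fun i => P (γ i)) k := by
  simp only [gMap, offset]
  ring

lemma hMap_apply (σ : (Fin j → ℤ) × Finset ℤ) (k : Fin j) :
    hMap j σ k = σ.1 k - offset j (oddMult σ.2) k := by
  simp only [hMap, offset, oddMult]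
  ring

lemma oddMult_gMap_snd (γ : Fin j → ℤ) : oddMult (gMap j γ).2 = fun k => P (γ k) := by
  funext k
  have hmem : 2 * (k : ℤ) + 1 ∈ (gMap j γ).2 ↔ Odd (γ k) := by
    simp only [gMap, mem_image, mem_filter, mem_univ, true_and]
    exact ⟨fun ⟨i, hi, hik⟩ => (Fin.ext (by omega) : i = k) ▸ hi, fun h => ⟨k, h, rfl⟩⟩
  unfold oddMult P
  simp only [hmem, ← Int.not_odd_iff_even, ite_not]

/-- Since `π_k` is even and `offset j e k ≡ e k (mod 2)`, the parity of `hMap j σ k` records whether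
`2k + 1` is a part of `ν`. -/
lemma P_hMap {σ : (Fin j → ℤ) × Finset ℤ} (hπ : ∀ k, Even (σ.1 k)) (k : Fin j) :
    P (hMap j σ k) = oddMult σ.2 k := by
  refine P_eq_of_even_add (oddMult_eq_zero_or_one _ k) ?_
  have h : hMap j σ k + oddMult σ.2 k = σ.1 k - (offset j (oddMult σ.2) k - oddMult σ.2 k) := by
    rw [hMap_apply]
    ring
  exact h ▸ (hπ k).sub (even_offset_sub (oddMult σ.2) k)

lemma hMap_gMap (γ : Fin j → ℤ) : hMap j (gMap j γ) = γ := by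
  funext k
  rw [hMap_apply, oddMult_gMap_snd, gMap_fst_apply, add_sub_cancel_right]

lemma gMap_hMap {σ : (Fin j → ℤ) × Finset ℤ} (hσ : σ ∈ Sset n j) : gMap j (hMap j σ) = σ := by
  obtain ⟨-, -, hπ, -, hν, -⟩ := hσ
  have hP : (fun k => P (hMap j σ k)) = oddMult σ.2 := funext (P_hMap fun k => (hπ k).1)
  refine Prod.ext (funext fun k => ?_) ?_
  · rw [gMap_fst_apply, hP, hMap_apply, sub_add_cancel]
  · have hodd : ∀ k, Odd (hMap j σ k) ↔ 2 * (k : ℤ) + 1 ∈ σ.2 := fun k => by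
      rw [← P_eq_one_iff, ← oddMult_eq_one_iff, P_hMap (fun k => (hπ k).1)]
    simp only [gMap, hodd]
    exact image_filter_oddMult hν

lemma gMap_mem_Sset {γ : Fin j → ℤ} (hγ : γ ∈ Gset n j) : gMap j γ ∈ Sset n j := by
  obtain ⟨hpos, hgap, hsum⟩ := hγ
  have hanti : Antitone (gMap j γ).1 := antitone_fin_of_succ_le fun i hi => by
    have := offset_sub_offset_succ (fun k => P (γ k)) i hi
    have := four_le_sub_add_P_add_P (hgap i hi).1 (hgap i hi).2
    simp only [gMap_fst_apply]
    linarith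
  have hbound : ∀ k, 2 * (j : ℤ) ≤ (gMap j γ).1 k := fun k => by
    have hlast : j - 1 < j := by have := k.isLt; omega
    refine le_trans ?_ (hanti (show k ≤ ⟨j - 1, hlast⟩ from Fin.le_def.mpr (Nat.le_sub_one_of_lt k.isLt)))
    rw [gMap_fst_apply, offset_last]
    linarith [two_le_add_P (hpos ⟨j - 1, hlast⟩)]
  have hν : ∀ m ∈ (gMap j γ).2, Odd m ∧ 1 ≤ m ∧ m ≤ 2 * (j : ℤ) - 1 := by
    simp only [gMap, mem_image, mem_filter, mem_univ, true_and]
    rintro _ ⟨k, -, rfl⟩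
    exact ⟨⟨k, by ring⟩, by omega, by omega⟩
  refine ⟨hanti, fun k => ?_, fun k => ⟨?_, hbound k⟩, ?_, hν, ?_⟩
  · linarith [hbound k, k.pos]
  · have := (even_add_P (γ k)).add (even_offset_sub (fun i => P (γ i)) k)
    rwa [add_add_sub_cancel, ← gMap_fst_apply] at this
  · exact (card_image_le.trans (card_filter_le _ _)).trans_eq (card_fin j)
  · rw [sum_eq_sum_oddMult hν, oddMult_gMap_snd]
    simp only [gMap_fst_apply, sum_add_distrib, sum_offset, hsum]
    ring

lemma hMap_mem_Gset {σ : (Fin j → ℤ) × Finset ℤ} (hσ : σ ∈ Sset n j) : hMap j σ ∈ Gset n j := by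
  obtain ⟨hanti, -, hπ, -, hν, hsum⟩ := hσ
  have hle : ∀ k : Fin j, oddMult σ.2 k ≤ 1 := fun k => by
    rcases oddMult_eq_zero_or_one σ.2 k with h | h <;> omega
  refine ⟨fun k => ?_, fun i hi => ?_, ?_⟩
  · have hk : (k : ℤ) + 1 ≤ j := by exact_mod_cast k.isLt
    rw [hMap_apply]
    linarith [(hπ k).2, offset_le hle k]
  · have hmono : σ.1 ⟨i + 1, hi⟩ ≤ σ.1 ⟨i, Nat.lt_of_succ_lt hi⟩ :=
      hanti (Fin.le_def.mpr (Nat.le_succ i))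
    have hdiff := offset_sub_offset_succ (oddMult σ.2) i hi
    simp only [hMap_apply]
    refine ⟨by linarith [hle ⟨i, Nat.lt_of_succ_lt hi⟩, hle ⟨i + 1, hi⟩], fun heven => ?_⟩
    have hodd : oddMult σ.2 ⟨i, Nat.lt_of_succ_lt hi⟩ = 0 := by
      rw [← P_hMap (fun k => (hπ k).1), P_of_even (hMap_apply σ _ ▸ heven)]
    linarith [hle ⟨i + 1, hi⟩]
  · simp only [hMap_apply, sum_sub_distrib, sum_offset, ← sum_eq_sum_oddMult hν, hsum]

end Bijection

theorem card_Gset_eq_card_Sset_general (n j : ℕ) :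
    Nat.card (Gset n j) = Nat.card (Sset n j) :=
  Nat.card_congr <| Set.BijOn.equiv (gMap j) <|
    Set.InvOn.bijOn ⟨fun γ _ => hMap_gMap γ, fun _ hσ => gMap_hMap hσ⟩
      (fun _ hγ => gMap_mem_Sset hγ) (fun _ hσ => hMap_mem_Gset hσ)

/-- For all positive `n` and `j`, the sets `G_{n,j}` and `S_{n,j}` have the same
cardinality. -/
theorem card_Gset_eq_card_Sset (n j : ℕ) (hn : 0 < n) (hj : 0 < j) :
    Nat.card (Gset n j) = Nat.card (Sset n j) :=
  card_Gset_eq_card_Sset_general n j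
end

section
/- Let j ≥ 1 and let γ = (γ₁, …, γ_j) be positive integers satisfying γ_i − γ_{i+1} ≥ 2 for 1 ≤ i ≤ j−1 and γ_i − γ_{i+1} ≥ 3 whenever γ_i is even. Define π_k = γ_k + 4k − 2j − 2 + P(γ_k) + 2·∑_{i=k+1}^{j} P(γ_i) for 1 ≤ k ≤ j. Then π_k ≥ 2j for all 1 ≤ k ≤ j. -/
/-!
Write `f k = γ k + P (γ k) + 2 ∑_{i > k} P (γ i)`, so that `π k ≥ 2j` says `f k ≥ 4 (j - 1 - k) + 2`.
Since `γ + P γ` rounds `γ` up to an even number, `f (j - 1) ≥ 2`. Moving from `k + 1` to `k`,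
`f k - f (k + 1) = (γ k + P (γ k)) - (γ (k + 1) - P (γ (k + 1)))` is the distance between
`γ k` rounded up and `γ (k + 1)` rounded down to even numbers; the gap conditions make it at least
`3`, and being even it is at least `4`.
-/

open Finset

lemma P_eq_emod (m : ℤ) : P m = m % 2 := by
  unfold P
  split_ifs with h
  · exact (Int.even_iff.mp h).symm
  · exact (Int.odd_iff.mp (Int.not_even_iff_odd.mp h)).symm

lemma two_le_add_P_s9 {a : ℤ} (ha : 1 ≤ a) : 2 ≤ a + P a := by
  rw [P_eq_emod]
  omega

lemma sub_P_add_four_le_add_P {a b : ℤ} (h2 : 2 ≤ a - b) (h3 : Even a → 3 ≤ a - b) :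
    b - P b + 4 ≤ a + P a := by
  rw [P_eq_emod, P_eq_emod]
  rcases Int.even_or_odd a with ha | ha
  · have := h3 ha
    have := Int.even_iff.mp ha
    omega
  · have := Int.odd_iff.mp ha
    omega

lemma Fin.sum_Ioi_castSucc {M : Type*} [AddCommMonoid M] {n : ℕ} (f : Fin (n + 1) → M)
    (i : Fin n) : ∑ k ∈ Ioi i.castSucc, f k = f i.succ + ∑ k ∈ Ioi i.succ, f k := by
  rw [← sum_insert (s := Ioi i.succ) (by simp), Ioi_insert]
  congr 1
  ext k
  simp [Fin.castSucc_lt_iff_succ_le]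

lemma four_mul_sub_add_two_le_add_P_add_sum {n : ℕ} (γ : Fin (n + 1) → ℤ)
    (hlast : 1 ≤ γ (Fin.last n))
    (hstep : ∀ i : Fin n, γ i.succ - P (γ i.succ) + 4 ≤ γ i.castSucc + P (γ i.castSucc))
    (k : Fin (n + 1)) :
    4 * ((n : ℤ) - k) + 2 ≤ γ k + P (γ k) + 2 * ∑ i ∈ Ioi k, P (γ i) := by
  induction k using Fin.reverseInduction with
  | last => simpa [Ioi_eq_empty.mpr fun b _ => Fin.le_last b] using two_le_add_P_s9 hlast
  | cast i ih =>
    rw [Fin.sum_Ioi_castSucc]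
    have := hstep i
    simp only [Fin.val_castSucc, Fin.val_succ, Nat.cast_add, Nat.cast_one] at ih ⊢
    linarith

/-- Indices are 0-based. -/
theorem pi_ge_two_j (j : ℕ) (hj : 1 ≤ j) (γ : Fin j → ℤ)
    (hpos : ∀ k, 1 ≤ γ k)
    (hgap : ∀ i : ℕ, ∀ h : i + 1 < j,
      2 ≤ γ ⟨i, Nat.lt_of_succ_lt h⟩ - γ ⟨i + 1, h⟩ ∧
      (Even (γ ⟨i, Nat.lt_of_succ_lt h⟩) →
        3 ≤ γ ⟨i, Nat.lt_of_succ_lt h⟩ - γ ⟨i + 1, h⟩))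
    (π : Fin j → ℤ)
    (hπ : ∀ k : Fin j, π k = γ k + 4 * ((k : ℤ) + 1) - 2 * (j : ℤ) - 2 + P (γ k)
      + 2 * ∑ i ∈ Finset.Ioi k, P (γ i)) :
    ∀ k : Fin j, 2 * (j : ℤ) ≤ π k := by
  obtain ⟨n, rfl⟩ : ∃ n, j = n + 1 := ⟨j - 1, by omega⟩
  have hstep (i : Fin n) : γ i.succ - P (γ i.succ) + 4 ≤ γ i.castSucc + P (γ i.castSucc) :=
    have ⟨h2, h3⟩ := hgap i (Nat.succ_lt_succ i.2)
    sub_P_add_four_le_add_P h2 h3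
  intro k
  have := four_mul_sub_add_two_le_add_P_add_sum γ (hpos _) hstep k
  rw [hπ k]
  push_cast
  linarith
end
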